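/- arXiv:2110.05141 — 7 statements merged into one kernel-verified Lean document; each statement's English description precedes it below -/
import Mathlib

section
/- Let g be a Lie algebra over a field K of characteristic 2 with an invertible derivation Δ. Then the bilinear operation x ⋆ y := Δ⁻¹([x, Δ(y)]) is left-symmetric: (x⋆y)⋆z + x⋆(y⋆z) = (y⋆x)⋆z + y⋆(x⋆z) for all x, y, z in g. -/
/-- For a Lie algebra over a field of characteristic 2 with an
invertible derivation `Δ`, the product `x ⋆ y := Δ⁻¹ [x, Δ y]` is left-symmetric. -/
theorem stmt2 {K g : Type*} [Field K] [CharP K 2] [LieRing g] [LieAlgebra K g]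
    (Δ : g ≃ₗ[K] g)
    (hΔ : ∀ x y : g, Δ ⁅x, y⁆ = ⁅Δ x, y⁆ + ⁅x, Δ y⁆)
    (star : g → g → g)
    (hstar : ∀ x y, star x y = Δ.symm ⁅x, Δ y⁆) :
    ∀ x y z : g,
      star (star x y) z + star x (star y z) = star (star y x) z + star y (star x z) := by
  have two : ∀ a : g, a + a = 0 := by
    intro a
    have h2 : (2 : K) = 0 := CharTwo.two_eq_zero
    calc a + a = (2 : K) • a := (two_smul K a).symm
      _ = 0 := by rw [h2, zero_smul]
  have negeq : ∀ a : g, -a = a := fun a => neg_eq_of_add_eq_zero_left (two a)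
  intro x y z
  simp only [hstar]
  apply Δ.injective
  simp only [map_add, Δ.apply_symm_apply]
  -- key: Δ.symm ⁅x, Δ y⁆ + ⁅x, y⁆ = Δ.symm ⁅y, Δ x⁆
  have key : Δ.symm ⁅x, Δ y⁆ + ⁅x, y⁆ = Δ.symm ⁅y, Δ x⁆ := by
    apply Δ.injective
    rw [map_add, Δ.apply_symm_apply, Δ.apply_symm_apply, hΔ]
    rw [show ⁅y, Δ x⁆ = ⁅Δ x, y⁆ by rw [← lie_skew, negeq]]
    rw [add_left_comm, two, add_zero]
  have jac : ⁅x, ⁅y, Δ z⁆⁆ = ⁅⁅x, y⁆, Δ z⁆ + ⁅y, ⁅x, Δ z⁆⁆ := leibniz_lie x y (Δ z)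
  rw [jac]
  rw [show ⁅Δ.symm ⁅y, Δ x⁆, Δ z⁆ = ⁅Δ.symm ⁅x, Δ y⁆, Δ z⁆ + ⁅⁅x, y⁆, Δ z⁆ by
    rw [← add_lie, key]]
  abel
end

section
/- Let g = g₀ ⊕ g₁ be a Z/2-graded Lie algebra over a field of characteristic 2 with an invertible derivation Δ preserving the grading, and let x ⋆ y := Δ⁻¹([x, Δ(y)]). If Asso(x,x,y) = 0 for all x ∈ g₁ and all y ∈ g, then the map s: g₁ → g₀ given by s(x) := x ⋆ x is a squaring making g a Lie superalgebra in characteristic 2; in particular s(λx) = λ²s(x), s(x+y) + s(x) + s(y) = [x,y], and [s(x), y] = [x, [x, y]] for all x ∈ g₁ and y ∈ g. -/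
/-- A Z/2-graded Lie algebra in characteristic 2 with an invertible
grading-preserving derivation `Δ`, whose left-symmetric product
`x ⋆ y := Δ⁻¹ [x, Δ y]` has vanishing associator `Asso(x,x,y)` for odd `x`, carries a
squaring `s(x) := x ⋆ x` making it a Lie superalgebra. -/
theorem stmt4 {K g : Type*} [Field K] [CharP K 2] [LieRing g] [LieAlgebra K g]
    (g0 g1 : Submodule K g) (hcompl : IsCompl g0 g1)
    (h00 : ∀ x ∈ g0, ∀ y ∈ g0, ⁅x, y⁆ ∈ g0)
    (h01 : ∀ x ∈ g0, ∀ y ∈ g1, ⁅x, y⁆ ∈ g1)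
    (h11 : ∀ x ∈ g1, ∀ y ∈ g1, ⁅x, y⁆ ∈ g0)
    (Δ : g ≃ₗ[K] g)
    (hΔ : ∀ x y : g, Δ ⁅x, y⁆ = ⁅Δ x, y⁆ + ⁅x, Δ y⁆)
    (hΔ0 : ∀ x ∈ g0, Δ x ∈ g0) (hΔ1 : ∀ x ∈ g1, Δ x ∈ g1)
    (star : g → g → g)
    (hstar : ∀ x y, star x y = Δ.symm ⁅x, Δ y⁆)
    (hass : ∀ x ∈ g1, ∀ y : g, star (star x x) y + star x (star x y) = 0) :
    (∀ x ∈ g1, star x x ∈ g0) ∧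
    (∀ (c : K), ∀ x ∈ g1, star (c • x) (c • x) = (c * c) • star x x) ∧
    (∀ x ∈ g1, ∀ y ∈ g1, star (x + y) (x + y) + star x x + star y y = ⁅x, y⁆) ∧
    (∀ x ∈ g1, ∀ y : g, ⁅star x x, y⁆ = ⁅x, ⁅x, y⁆⁆) := by
  -- char 2 facts
  have h2 : (2 : K) = 0 := by exact_mod_cast CharP.cast_eq_zero K 2
  have hzz : ∀ z : g, z + z = 0 := by
    intro z
    have : z + z = (2 : K) • z := by rw [two_smul]
    rw [this, h2, zero_smul]
  have hneg : ∀ z : g, -z = z := by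
    intro z; rw [neg_eq_iff_add_eq_zero, hzz]
  -- Δ.symm preserves g0
  have hsymm0 : ∀ w ∈ g0, Δ.symm w ∈ g0 := by
    intro w hw
    have hmem : Δ.symm w ∈ g0 ⊔ g1 := by rw [hcompl.sup_eq_top]; trivial
    obtain ⟨a, ha, b, hb, hab⟩ := Submodule.mem_sup.mp hmem
    have hw' : w = Δ a + Δ b := by
      have := congrArg Δ hab
      simpa [map_add] using this.symm
    have hΔb0 : Δ b ∈ g0 := by
      have : Δ b = w - Δ a := by rw [hw']; abel
      rw [this]
      exact g0.sub_mem hw (hΔ0 a ha)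
    have hΔb1 : Δ b ∈ g1 := hΔ1 b hb
    have hb0 : Δ b = 0 := by
      have := hcompl.disjoint
      have := Submodule.disjoint_def.mp this (Δ b) hΔb0 hΔb1
      exact this
    have : b = 0 := by
      have := Δ.injective (a₁ := b) (a₂ := 0)
      apply this; simpa using hb0
    rw [← hab, this, add_zero]; exact ha
  refine ⟨?_, ?_, ?_, ?_⟩
  · intro x hx
    rw [hstar]
    exact hsymm0 _ (h11 x hx _ (hΔ1 x hx))
  · intro c x hx
    rw [hstar, hstar, map_smul, lie_smul, smul_lie, map_smul, map_smul, smul_smul]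
  · intro x hx y hy
    have h1 : ⁅Δ x, y⁆ = ⁅y, Δ x⁆ := by
      rw [← lie_skew, hneg]
    have key : ⁅x + y, Δ (x + y)⁆ + ⁅x, Δ x⁆ + ⁅y, Δ y⁆ = Δ ⁅x, y⁆ := by
      simp only [hΔ, map_add, lie_add, add_lie, h1]
      abel_nf
      rw [show (2 : ℤ) • ⁅x, Δ x⁆ = ⁅x, Δ x⁆ + ⁅x, Δ x⁆ from two_zsmul _,
          show (2 : ℤ) • ⁅y, Δ y⁆ = ⁅y, Δ y⁆ + ⁅y, Δ y⁆ from two_zsmul _,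
          hzz, hzz]
      abel
    rw [hstar, hstar, hstar, ← map_add, ← map_add, key]
    simp
  · intro x hx y
    have h := hass x hx (Δ.symm y)
    have heq : star (star x x) (Δ.symm y) = star x (star x (Δ.symm y)) := by
      have h2 := add_eq_zero_iff_eq_neg.mp h
      rw [h2, hneg]
    rw [hstar, hstar, hstar, hstar] at heq
    simp only [LinearEquiv.apply_symm_apply] at heq
    rw [hstar x x]
    exact Δ.symm.injective heq
end

section
/- Let g be a Lie superalgebra over a field K of characteristic 2 and r = Σᵢ aᵢ ⊗ bᵢ ∈ g ⊗ g. Then the map s*: g₁* → g₀* defined by s*(f) := Σᵢ f([−, aᵢ]) f(bᵢ) is a squaring on the dual space: s*(λf) = λ² s*(f), and the map (f,h) ↦ s*(f+h) + s*(f) + s*(h) is bilinear. -/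
/-- given `r = Σ aᵢ ⊗ bᵢ`, the map `s*(f) := Σ f([−,aᵢ]) f(bᵢ)` is a
squaring on the dual space: `s*(λf) = λ² s*(f)` and its polarization is bilinear. -/
theorem stmt9 {K V : Type*} [Field K] [CharP K 2]
    [AddCommGroup V] [Module K V]
    (br : V →ₗ[K] V →ₗ[K] V)
    (n : ℕ) (a b : Fin n → V)
    (sstar : Module.Dual K V → Module.Dual K V)
    (hs : ∀ f, sstar f = ∑ i, f (b i) • (f.comp (br.flip (a i))))
    (pol : Module.Dual K V → Module.Dual K V → Module.Dual K V)
    (hpol : ∀ f h, pol f h = sstar (f + h) + sstar f + sstar h) :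
    (∀ (c : K) (f : Module.Dual K V), sstar (c • f) = (c * c) • sstar f) ∧
    (∀ f f' h : Module.Dual K V, pol (f + f') h = pol f h + pol f' h) ∧
    (∀ (c : K) (f h : Module.Dual K V), pol (c • f) h = c • pol f h) ∧
    (∀ f h : Module.Dual K V, pol f h = pol h f) := by
  have h2 : (2 : K) = 0 := by exact_mod_cast CharP.cast_eq_zero K 2
  have key : ∀ f h, pol f h = ∑ i,
      (f (b i) • (LinearMap.comp h (br.flip (a i))) +
       h (b i) • (LinearMap.comp f (br.flip (a i)))) := by
    intro f h
    rw [hpol, hs, hs, hs]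
    ext v
    simp only [LinearMap.add_apply, LinearMap.coe_sum, Finset.sum_apply,
      LinearMap.smul_apply, LinearMap.comp_apply, smul_eq_mul,
      ← Finset.sum_add_distrib]
    refine Finset.sum_congr rfl fun i _ => ?_
    linear_combination (f (b i) * f (br.flip (a i) v) + h (b i) * h (br.flip (a i) v)) * h2
  refine ⟨?_, ?_, ?_, ?_⟩
  · intro c f
    rw [hs, hs, Finset.smul_sum]
    refine Finset.sum_congr rfl fun i _ => ?_
    ext v
    simp [smul_eq_mul]
    ring
  · intro f f' h
    rw [key, key, key]
    ext v
    simp only [LinearMap.add_apply, LinearMap.coe_sum, Finset.sum_apply,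
      LinearMap.smul_apply, LinearMap.comp_apply, smul_eq_mul,
      ← Finset.sum_add_distrib]
    refine Finset.sum_congr rfl fun i _ => ?_
    ring
  · intro c f h
    rw [key, key, Finset.smul_sum]
    refine Finset.sum_congr rfl fun i _ => ?_
    ext v
    have e1 : (c • f) (b i) = c * f (b i) := rfl
    simp [e1, smul_eq_mul]
    ring
  · intro f h
    rw [key, key]
    refine Finset.sum_congr rfl fun i _ => ?_
    exact add_comm _ _
end

section
/- Let g be a finite-dimensional Lie superalgebra over a field of characteristic 2 with a symmetric r-matrix r ∈ g⊗g satisfying the classical Yang–Baxter equation, and let R: g* → g, R(f) = Σᵢ f(aᵢ) bᵢ. Then Im(R) is a Lie subalgebra of g (i.e., closed under the bracket), and the bilinear form ω on Im(R) defined by ω(R(f), R(h)) := h(R(f)) is well-defined, and satisfies the cocycle condition ω(u,[v,w]) + ω(w,[u,v]) + ω(v,[w,u]) = 0 for all u, v, w ∈ Im(R). -/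
/-- for a symmetric `r`-matrix satisfying the CYBE, the image of
`R : g* → g`, `R(f) = Σ f(aᵢ) bᵢ`, is closed under the bracket; the form
`ω(R f, R h) := h (R f)` is well defined and satisfies the cocycle condition
`ω(u,[v,w]) + ω(w,[u,v]) + ω(v,[w,u]) = 0` on `Im R`. -/
theorem stmt11 {K V : Type*} [Field K] [CharP K 2]
    [AddCommGroup V] [Module K V] [FiniteDimensional K V]
    (br : V →ₗ[K] V →ₗ[K] V)
    (n : ℕ) (a b : Fin n → V)
    (R : Module.Dual K V →ₗ[K] V)
    (hR : ∀ f, R f = ∑ i, f (a i) • b i)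
    (hsym : ∀ f h : Module.Dual K V, f (R h) = h (R f))
    (hcybe : ∀ f h l : Module.Dual K V,
      f (br (R h) (R l)) + l (br (R f) (R h)) + h (br (R l) (R f)) = 0) :
    (∀ f h : Module.Dual K V, br (R f) (R h) ∈ LinearMap.range R) ∧
    (∀ f f' h h' : Module.Dual K V,
      R f = R f' → R h = R h' → h (R f) = h' (R f')) ∧
    (∀ f h l m₁ m₂ m₃ : Module.Dual K V,
      R m₁ = br (R h) (R l) → R m₂ = br (R f) (R h) → R m₃ = br (R l) (R f) →
      m₁ (R f) + m₂ (R l) + m₃ (R h) = 0) := by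
  refine ⟨?_, ?_, ?_⟩
  · intro f h
    rw [← Subspace.forall_mem_dualAnnihilator_apply_eq_zero_iff (LinearMap.range R)]
    intro φ hφ
    rw [Submodule.mem_dualAnnihilator] at hφ
    have hRφ : R φ = 0 := by
      rw [← Module.forall_dual_apply_eq_zero_iff K (R φ)]
      intro m
      rw [← hsym φ m]
      exact hφ _ ⟨m, rfl⟩
    have := hcybe f h φ
    rw [hRφ, map_zero, map_zero, map_zero, LinearMap.zero_apply, map_zero] at this
    -- this : f 0 + φ (br (R f) (R h)) + h 0 = 0 roughly
    simpa using this
  · intro f f' h h' hf hh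
    calc h (R f) = h (R f') := by rw [hf]
      _ = f' (R h) := hsym _ _
      _ = f' (R h') := by rw [hh]
      _ = h' (R f') := hsym _ _
  · intro f h l m₁ m₂ m₃ h1 h2 h3
    have e1 : m₁ (R f) = f (br (R h) (R l)) := by rw [hsym m₁ f, h1]
    have e2 : m₂ (R l) = l (br (R f) (R h)) := by rw [hsym m₂ l, h2]
    have e3 : m₃ (R h) = h (br (R l) (R f)) := by rw [hsym m₃ h, h3]
    rw [e1, e2, e3]; exact hcybe f h l
end

section
/- Let (g, B) be a Lie superalgebra over a field of characteristic 2 with a NIS B admitting an invertible even derivation Δ with B Δ-invariant. Then every odd central element lies in the cone: z(g)₁ ⊆ C(g, B), where C(g, B) := {x ∈ g₁ : B(s(x), s(t)) = 0 for all t ∈ g₁}. -/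
/-- if a NIS-Lie superalgebra `(g, B)` in characteristic 2 admits an
invertible even derivation `Δ` with `B` Δ-invariant, then every odd central element
lies in the cone `C(g,B) = {x ∈ g₁ : B(s(x), s(t)) = 0 ∀ t ∈ g₁}`. -/
theorem stmt14 {K V : Type*} [Field K] [CharP K 2]
    [AddCommGroup V] [Module K V]
    (g0 g1 : Submodule K V)
    (br : V →ₗ[K] V →ₗ[K] V) (sq : V → V)
    (B : V →ₗ[K] V →ₗ[K] K)
    (hBnd : ∀ x, (∀ y, B x y = 0) → x = 0)
    (hBinv : ∀ x y z, B (br x y) z = B x (br y z))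
    (hBsym : ∀ x y, B x y = B y x)
    (hBeven : ∀ x ∈ g0, ∀ y ∈ g1, B x y = 0)
    (Δ : V →ₗ[K] V) (hΔbij : Function.Bijective Δ)
    (hΔ0 : ∀ x ∈ g0, Δ x ∈ g0) (hΔ1 : ∀ x ∈ g1, Δ x ∈ g1)
    (hΔbr : ∀ x y, Δ (br x y) = br (Δ x) y + br x (Δ y))
    (hΔsq : ∀ x ∈ g1, Δ (sq x) = br (Δ x) x)
    (hΔinv : ∀ x y, B (Δ x) y = B x (Δ y)) :
    ∀ x ∈ g1, (∀ y, br x y = 0) → ∀ t ∈ g1, B (sq x) (sq t) = 0 := by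
  intro x hx hc t ht
  have hΔc : ∀ y, br (Δ x) y = 0 := by
    intro y
    have h := hΔbr x y
    rw [hc y, hc (Δ y), map_zero, add_zero] at h
    exact h.symm
  have h0 : Δ (sq x) = 0 := by rw [hΔsq x hx, hΔc x]
  have hsq : sq x = 0 := hΔbij.1 (by rw [h0, map_zero])
  rw [hsq, map_zero, LinearMap.zero_apply]
end

section
/- Let (a, B_a) be a Lie superalgebra over a field of characteristic 2 with an even NIS, D an even derivation of a with B_a(D(a), b) + B_a(a, D(b)) = 0 for all a,b and B_a(D(a), a) = 0 for all even a, and α: a₁ → K a quadratic form whose polar form B_α satisfies B_α(a,b) = B_a(a, D(b)) for odd a,b. Then g := Kx ⊕ a ⊕ Kx* (x even) with bracket [x, g] = 0, [a,b]_g := [a,b]_a + B_a(D(a),b)x, [x*, a]_g := D(a), and squaring s_g(a) := s_a(a) + α(a)x, is a Lie superalgebra, and the bilinear form B_g extending B_a with B_g(x, x*) = 1, B_g(x,x) = 0, B_g(a, x) = B_g(a, x*) = 0 is non-degenerate, even, 0̄-antisymmetric, and invariant. -/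
/-!
In characteristic 2 all signs disappear: an alternating bracket is symmetric, and the
skew-symmetry of `D` with respect to `B` says that `D` is `B`-symmetric. The `a`-component of
the Jacobi identity of `g` then reduces to the Jacobi identity of `a` and the Leibniz rule for
`D`, since every other term occurs twice; its `x`-component is the cocycle identity
`B(D a, [b, c]) + B(D b, [c, a]) + B(D c, [a, b]) = 0`, which follows from invariance of `B`
and the Leibniz rule. For `[u, u] = 0` one needs `B(D a, a) = 0` for all `a`: on `a₀` this is
assumed, on `a₁` it is `B_α(a, a) = α(2a) + 2α(a) = 0`, and the mixed terms vanish because `B` and `D`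
are even.
-/

theorem CharTwo.add_self_eq_zero_of_module (R : Type*) {M : Type*} [Ring R] [CharP R 2]
    [AddCommGroup M] [Module R M] (x : M) : x + x = 0 := by
  rw [← two_smul R, CharTwo.two_eq_zero, zero_smul]

theorem LinearMap.IsAlt.apply_comm_of_charTwo {R M N : Type*} [CommRing R] [CharP R 2]
    [AddCommGroup M] [Module R M] [AddCommGroup N] [Module R N] {f : M →ₗ[R] M →ₗ[R] N}
    (hf : f.IsAlt) (x y : M) : f x y = f y x := by
  rw [← hf.neg, neg_eq_iff_add_eq_zero, CharTwo.add_self_eq_zero_of_module R]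

theorem polar_self_eq_zero_of_charTwo {R M : Type*} [CommRing R] [CharP R 2] [AddCommGroup M]
    [Module R M] {p : Submodule R M} {α : M → R} {f : M → M → R}
    (hαsmul : ∀ (c : R), ∀ x ∈ p, α (c • x) = c * c * α x)
    (hαpol : ∀ x ∈ p, ∀ y ∈ p, α (x + y) + α x + α y = f x y) {x : M} (hx : x ∈ p) :
    f x x = 0 := by
  have hα0 : α 0 = 0 := by simpa using hαsmul 0 0 p.zero_mem
  rw [← hαpol x hx x hx, CharTwo.add_self_eq_zero_of_module R, hα0, zero_add,
    CharTwo.add_self_eq_zero]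

section InvariantForm

variable {K V : Type*} [CommRing K] [AddCommGroup V] [Module K V]
  {B : V →ₗ[K] V →ₗ[K] K} {D : V →ₗ[K] V}

theorem form_derivation_self_eq_zero {g0 g1 : Submodule K V} (hcompl : IsCompl g0 g1)
    (hBsym : ∀ x y, B x y = B y x) (hBeven : ∀ x ∈ g0, ∀ y ∈ g1, B x y = 0)
    (hD0 : ∀ x ∈ g0, D x ∈ g0) (hD1 : ∀ x ∈ g1, D x ∈ g1)
    (hDalt : ∀ x ∈ g0, B (D x) x = 0) (hDodd : ∀ x ∈ g1, B x (D x) = 0) (x : V) :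
    B (D x) x = 0 := by
  obtain ⟨x0, x1, hx0, hx1, rfl⟩ :=
    Submodule.codisjoint_iff_exists_add_eq.mp hcompl.codisjoint x
  simp only [map_add, LinearMap.add_apply, hDalt x0 hx0, hBeven _ (hD0 x0 hx0) x1 hx1,
    hBsym (D x1), hBeven x0 hx0 _ (hD1 x1 hx1), hDodd x1 hx1, add_zero]

variable {br : V →ₗ[K] V →ₗ[K] V}

theorem cyclic_sum_form_derivation_bracket [CharP K 2]
    (hBinv : ∀ x y z, B (br x y) z = B x (br y z))
    (hBsym : ∀ x y, B x y = B y x) (hDbr : ∀ x y, D (br x y) = br (D x) y + br x (D y))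
    (hDsymm : ∀ x y, B (D x) y = B x (D y)) (a b c : V) :
    B (D a) (br b c) + B (D b) (br c a) + B (D c) (br a b) = 0 := by
  have hc : B (D c) (br a b) = B (D a) (br b c) + B a (br (D b) c) := by
    rw [hDsymm, hDbr, map_add, hBsym c, hBsym c, hBinv, hBinv]
  have hb : B (D b) (br c a) = B a (br (D b) c) := by
    rw [← hBinv, hBsym]
  linear_combination hc + hb +
    (B (D a) (br b c) + B a (br (D b) c)) * (CharTwo.two_eq_zero : (2 : K) = 0)

end InvariantForm

namespace DoubleExtension

variable {K V : Type*} [CommRing K] [AddCommGroup V] [Module K V]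

def bracket (br : V →ₗ[K] V →ₗ[K] V) (B : V →ₗ[K] V →ₗ[K] K) (D : V →ₗ[K] V)
    (u v : K × V × K) : K × V × K :=
  (B (D u.2.1) v.2.1, br u.2.1 v.2.1 + u.2.2 • D v.2.1 + v.2.2 • D u.2.1, 0)

def square (sq : V → V) (α : V → K) (u : K × V × K) : K × V × K :=
  (α u.2.1, sq u.2.1, 0)

def form (B : V →ₗ[K] V →ₗ[K] K) (u v : K × V × K) : K :=
  B u.2.1 v.2.1 + u.1 * v.2.2 + u.2.2 * v.1

def evenPart (g0 : Submodule K V) : Set (K × V × K) :=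
  {u | u.2.1 ∈ g0}

def oddPart (g1 : Submodule K V) : Set (K × V × K) :=
  {u | u.1 = 0 ∧ u.2.1 ∈ g1 ∧ u.2.2 = 0}

variable {br : V →ₗ[K] V →ₗ[K] V} {B : V →ₗ[K] V →ₗ[K] K} {D : V →ₗ[K] V}
  {sq : V → V} {α : V → K} {g0 g1 : Submodule K V}

theorem bracket_self [CharP K 2] (halt : br.IsAlt) (hDself : ∀ x, B (D x) x = 0)
    (u : K × V × K) : bracket br B D u u = 0 := by
  refine Prod.ext (hDself u.2.1) (Prod.ext ?_ rfl)
  simp only [bracket, halt u.2.1, zero_add, CharTwo.add_self_eq_zero_of_module K, Prod.snd_zero,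
    Prod.fst_zero]

theorem bracket_jacobi [CharP K 2] (halt : br.IsAlt)
    (hjac : ∀ u v w : V, br u (br v w) + br v (br w u) + br w (br u v) = 0)
    (hDbr : ∀ x y, D (br x y) = br (D x) y + br x (D y))
    (hBsym : ∀ x y, B x y = B y x)
    (hcocycle : ∀ a b c : V, B (D a) (br b c) + B (D b) (br c a) + B (D c) (br a b) = 0)
    (u v w : K × V × K) :
    bracket br B D u (bracket br B D v w) + bracket br B D v (bracket br B D w u)
      + bracket br B D w (bracket br B D u v) = 0 := by
  obtain ⟨p, a, q⟩ := u
  obtain ⟨r, b, s⟩ := v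
  obtain ⟨t, c, e⟩ := w
  have h2 : (2 : K) = 0 := CharTwo.two_eq_zero
  simp only [bracket, hDbr, map_add, map_smul, smul_eq_mul, Prod.mk_add_mk, Prod.mk_eq_zero,
    add_zero, and_true]
  constructor
  · linear_combination hcocycle a b c + s * hBsym (D a) (D c) + q * hBsym (D b) (D c)
      + e * hBsym (D a) (D b)
      + (s * B (D c) (D a) + q * B (D c) (D b) + e * B (D b) (D a)) * h2
  · linear_combination (norm := module) hjac a b c - s • halt.neg a (D c)
      - e • halt.neg b (D a) - q • halt.neg (D b) c
      + h2 • (q • br b (D c) + e • br a (D b) + s • br c (D a)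
        + (q * s) • D (D c) + (s * e) • D (D a) + (e * q) • D (D b))

theorem square_mem_evenPart (hsqmem : ∀ x ∈ g1, sq x ∈ g0) {u : K × V × K}
    (hu : u ∈ oddPart g1) : square sq α u ∈ evenPart g0 :=
  hsqmem u.2.1 hu.2.1

theorem square_smul (hsqsmul : ∀ (c : K), ∀ x ∈ g1, sq (c • x) = (c * c) • sq x)
    (hαsmul : ∀ (c : K), ∀ x ∈ g1, α (c • x) = c * c * α x) (c : K) {u : K × V × K}
    (hu : u ∈ oddPart g1) : square sq α (c • u) = (c * c) • square sq α u := by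
  obtain ⟨p, a, q⟩ := u
  obtain ⟨rfl : p = 0, ha, rfl : q = 0⟩ := hu
  simp only [square, Prod.smul_mk, smul_eq_mul, mul_zero, hαsmul c a ha, hsqsmul c a ha]

theorem square_add (hsqpol : ∀ x ∈ g1, ∀ y ∈ g1, sq (x + y) + sq x + sq y = br x y)
    (hαpol : ∀ x ∈ g1, ∀ y ∈ g1, α (x + y) + α x + α y = B x (D y))
    (hDsymm : ∀ x y, B (D x) y = B x (D y)) {u v : K × V × K}
    (hu : u ∈ oddPart g1) (hv : v ∈ oddPart g1) :
    square sq α (u + v) + square sq α u + square sq α v = bracket br B D u v := by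
  obtain ⟨p, a, q⟩ := u
  obtain ⟨r, b, s⟩ := v
  obtain ⟨rfl : p = 0, ha, rfl : q = 0⟩ := hu
  obtain ⟨rfl : r = 0, hb, rfl : s = 0⟩ := hv
  simp only [square, bracket, Prod.mk_add_mk, hαpol a ha b hb, hsqpol a ha b hb, hDsymm,
    zero_smul, add_zero]

theorem bracket_square [CharP K 2] (halt : br.IsAlt)
    (hsqjac : ∀ x ∈ g1, ∀ y : V, br (sq x) y = br x (br x y))
    (hBinv : ∀ x y z, B (br x y) z = B x (br y z)) (hBalt : ∀ x ∈ g1, B x x = 0)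
    (hD1 : ∀ x ∈ g1, D x ∈ g1) (hDsq : ∀ x ∈ g1, D (sq x) = br (D x) x)
    {u : K × V × K} (hu : u ∈ oddPart g1) (v : K × V × K) :
    bracket br B D (square sq α u) v = bracket br B D u (bracket br B D u v) := by
  obtain ⟨p, a, q⟩ := u
  obtain ⟨rfl : p = 0, ha, rfl : q = 0⟩ := hu
  simp only [square, bracket, hDsq a ha, hsqjac a ha, hBinv,
    map_add, map_smul, hBalt (D a) (hD1 a ha), zero_smul, add_zero, smul_zero]
  rw [halt.apply_comm_of_charTwo (D a) a]

theorem form_nondegenerate (hBnd : ∀ x, (∀ y, B x y = 0) → x = 0) (u : K × V × K)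
    (hu : ∀ v, form B u v = 0) : u = 0 := by
  obtain ⟨p, a, q⟩ := u
  have hp : p = 0 := by simpa [form] using hu (0, 0, 1)
  have hq : q = 0 := by simpa [form] using hu (1, 0, 0)
  have ha : a = 0 := hBnd a fun y => by simpa [form] using hu (0, y, 0)
  simp [hp, ha, hq]

theorem form_bracket (hBinv : ∀ x y z, B (br x y) z = B x (br y z))
    (hDsymm : ∀ x y, B (D x) y = B x (D y)) (u v w : K × V × K) :
    form B (bracket br B D u v) w = form B u (bracket br B D v w) := by
  obtain ⟨p, a, q⟩ := u
  obtain ⟨r, b, s⟩ := v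
  obtain ⟨t, c, e⟩ := w
  simp only [bracket, form, map_add, map_smul, LinearMap.add_apply, LinearMap.smul_apply,
    smul_eq_mul]
  linear_combination hBinv a b c + s * hDsymm a c + e * hDsymm a b

theorem form_comm (hBsym : ∀ x y, B x y = B y x) (u v : K × V × K) :
    form B u v = form B v u := by
  simp only [form, hBsym u.2.1]
  ring

theorem form_self_of_mem_oddPart (hBalt : ∀ x ∈ g1, B x x = 0) {u : K × V × K}
    (hu : u ∈ oddPart g1) : form B u u = 0 := by
  simp [form, hu.1, hu.2.2, hBalt u.2.1 hu.2.1]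

theorem form_evenPart_oddPart (hBeven : ∀ x ∈ g0, ∀ y ∈ g1, B x y = 0) {u v : K × V × K}
    (hu : u ∈ evenPart g0) (hv : v ∈ oddPart g1) : form B u v = 0 := by
  simp [form, hv.1, hv.2.2, hBeven u.2.1 hu v.2.1 hv.2.1]

end DoubleExtension

/-- The extended space `K x ⊕ a ⊕ K x*` is modeled as `K × V × K`, with `x = (1,0,0)` and
`x* = (0,0,1)`. -/
theorem stmt15_general {K V : Type*} [Field K] [CharP K 2]
    [AddCommGroup V] [Module K V]
    (g0 g1 : Submodule K V) (hcompl : IsCompl g0 g1)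
    (br : V →ₗ[K] V →ₗ[K] V) (sq : V → V)
    -- Lie superalgebra axioms on `a`
    (halt : ∀ u : V, br u u = 0)
    (hjac : ∀ u v w : V, br u (br v w) + br v (br w u) + br w (br u v) = 0)
    (hsqmem : ∀ x ∈ g1, sq x ∈ g0)
    (hsqsmul : ∀ (c : K), ∀ x ∈ g1, sq (c • x) = (c * c) • sq x)
    (hsqpol : ∀ x ∈ g1, ∀ y ∈ g1, sq (x + y) + sq x + sq y = br x y)
    (hsqjac : ∀ x ∈ g1, ∀ y : V, br (sq x) y = br x (br x y))
    -- even NIS on `a`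
    (B : V →ₗ[K] V →ₗ[K] K)
    (hBnd : ∀ x, (∀ y, B x y = 0) → x = 0)
    (hBinv : ∀ x y z, B (br x y) z = B x (br y z))
    (hBsym : ∀ x y, B x y = B y x)
    (hBalt : ∀ x ∈ g1, B x x = 0)
    (hBeven : ∀ x ∈ g0, ∀ y ∈ g1, B x y = 0)
    -- the even derivation `D`
    (D : V →ₗ[K] V)
    (hD0 : ∀ x ∈ g0, D x ∈ g0) (hD1 : ∀ x ∈ g1, D x ∈ g1)
    (hDbr : ∀ x y, D (br x y) = br (D x) y + br x (D y))
    (hDsq : ∀ x ∈ g1, D (sq x) = br (D x) x)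
    (hDskew : ∀ x y, B (D x) y + B x (D y) = 0)
    (hDalt : ∀ x ∈ g0, B (D x) x = 0)
    -- the quadratic form α with polar form `B_α(x,y) = B(x, D y)`
    (α : V → K)
    (hαsmul : ∀ (c : K), ∀ x ∈ g1, α (c • x) = c * c * α x)
    (hαpol : ∀ x ∈ g1, ∀ y ∈ g1, α (x + y) + α x + α y = B x (D y))
    -- the double extension data on `K × V × K`
    (brG : (K × V × K) → (K × V × K) → (K × V × K))
    (hbrG : ∀ u v, brG u v =
      (B (D u.2.1) v.2.1, br u.2.1 v.2.1 + u.2.2 • D v.2.1 + v.2.2 • D u.2.1, 0))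
    (sG : (K × V × K) → (K × V × K))
    (hsG : ∀ u, sG u = (α u.2.1, sq u.2.1, 0))
    (BG : (K × V × K) → (K × V × K) → K)
    (hBG : ∀ u v, BG u v = B u.2.1 v.2.1 + u.1 * v.2.2 + u.2.2 * v.1)
    (G0 G1 : Set (K × V × K))
    (hG0 : G0 = {u | u.2.1 ∈ g0})
    (hG1 : G1 = {u | u.1 = 0 ∧ u.2.1 ∈ g1 ∧ u.2.2 = 0}) :
    -- `g` is a Lie superalgebra
    (∀ u, brG u u = 0) ∧
    (∀ u v w, brG u (brG v w) + brG v (brG w u) + brG w (brG u v) = 0) ∧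
    (∀ u ∈ G1, sG u ∈ G0) ∧
    (∀ (c : K), ∀ u ∈ G1, sG (c • u) = (c * c) • sG u) ∧
    (∀ u ∈ G1, ∀ v ∈ G1, sG (u + v) + sG u + sG v = brG u v) ∧
    (∀ u ∈ G1, ∀ v, brG (sG u) v = brG u (brG u v)) ∧
    -- `B_g` is a NIS: non-degenerate, invariant, even, 0̄-antisymmetric
    (∀ u, (∀ v, BG u v = 0) → u = 0) ∧
    (∀ u v w, BG (brG u v) w = BG u (brG v w)) ∧
    (∀ u v, BG u v = BG v u) ∧
    (∀ u ∈ G1, BG u u = 0) ∧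
    (∀ u ∈ G0, ∀ v ∈ G1, BG u v = 0) := by
  obtain rfl : brG = DoubleExtension.bracket br B D := funext₂ hbrG
  obtain rfl : sG = DoubleExtension.square sq α := funext hsG
  obtain rfl : BG = DoubleExtension.form B := funext₂ hBG
  subst hG0 hG1
  have hDsymm : ∀ x y, B (D x) y = B x (D y) := fun x y => CharTwo.add_eq_zero.mp (hDskew x y)
  have hDself : ∀ x, B (D x) x = 0 :=
    form_derivation_self_eq_zero hcompl hBsym hBeven hD0 hD1 hDalt
      fun x hx => polar_self_eq_zero_of_charTwo hαsmul hαpol hx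
  have hcocycle := cyclic_sum_form_derivation_bracket hBinv hBsym hDbr hDsymm
  open DoubleExtension in
  exact ⟨bracket_self halt hDself, bracket_jacobi halt hjac hDbr hBsym hcocycle,
    fun _ => square_mem_evenPart hsqmem, fun c _ => square_smul hsqsmul hαsmul c,
    fun _ hu _ hv => square_add hsqpol hαpol hDsymm hu hv,
    fun _ hu => bracket_square halt hsqjac hBinv hBalt hD1 hDsq hu,
    form_nondegenerate hBnd, form_bracket hBinv hDsymm, form_comm hBsym,
    fun _ => form_self_of_mem_oddPart hBalt, fun _ hu _ => form_evenPart_oddPart hBeven hu⟩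

/-- the even double extension (`D`-extension with `x` even) of a
NIS-Lie superalgebra `(a, B_a)` in characteristic 2 by an even derivation `D` and a
quadratic form `α` is again a NIS-Lie superalgebra. The extended space is
`K x ⊕ a ⊕ K x*`, modeled as `K × V × K` with `x = (1,0,0)`, `x* = (0,0,1)`. -/
theorem stmt15 {K V : Type*} [Field K] [CharP K 2]
    [AddCommGroup V] [Module K V]
    (g0 g1 : Submodule K V) (hcompl : IsCompl g0 g1)
    (br : V →ₗ[K] V →ₗ[K] V) (sq : V → V)
    -- Lie superalgebra axioms on `a`
    (halt : ∀ u : V, br u u = 0)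
    (hjac : ∀ u v w : V, br u (br v w) + br v (br w u) + br w (br u v) = 0)
    (hbr00 : ∀ x ∈ g0, ∀ y ∈ g0, br x y ∈ g0)
    (hbr01 : ∀ x ∈ g0, ∀ y ∈ g1, br x y ∈ g1)
    (hbr11 : ∀ x ∈ g1, ∀ y ∈ g1, br x y ∈ g0)
    (hsqmem : ∀ x ∈ g1, sq x ∈ g0)
    (hsqsmul : ∀ (c : K), ∀ x ∈ g1, sq (c • x) = (c * c) • sq x)
    (hsqpol : ∀ x ∈ g1, ∀ y ∈ g1, sq (x + y) + sq x + sq y = br x y)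
    (hsqjac : ∀ x ∈ g1, ∀ y : V, br (sq x) y = br x (br x y))
    -- even NIS on `a`
    (B : V →ₗ[K] V →ₗ[K] K)
    (hBnd : ∀ x, (∀ y, B x y = 0) → x = 0)
    (hBinv : ∀ x y z, B (br x y) z = B x (br y z))
    (hBsym : ∀ x y, B x y = B y x)
    (hBalt : ∀ x ∈ g1, B x x = 0)
    (hBeven : ∀ x ∈ g0, ∀ y ∈ g1, B x y = 0)
    -- the even derivation `D`
    (D : V →ₗ[K] V)
    (hD0 : ∀ x ∈ g0, D x ∈ g0) (hD1 : ∀ x ∈ g1, D x ∈ g1)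
    (hDbr : ∀ x y, D (br x y) = br (D x) y + br x (D y))
    (hDsq : ∀ x ∈ g1, D (sq x) = br (D x) x)
    (hDskew : ∀ x y, B (D x) y + B x (D y) = 0)
    (hDalt : ∀ x ∈ g0, B (D x) x = 0)
    -- the quadratic form α with polar form `B_α(x,y) = B(x, D y)`
    (α : V → K)
    (hαsmul : ∀ (c : K), ∀ x ∈ g1, α (c • x) = c * c * α x)
    (hαpol : ∀ x ∈ g1, ∀ y ∈ g1, α (x + y) + α x + α y = B x (D y))
    -- the double extension data on `K × V × K`
    (brG : (K × V × K) → (K × V × K) → (K × V × K))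
    (hbrG : ∀ u v, brG u v =
      (B (D u.2.1) v.2.1, br u.2.1 v.2.1 + u.2.2 • D v.2.1 + v.2.2 • D u.2.1, 0))
    (sG : (K × V × K) → (K × V × K))
    (hsG : ∀ u, sG u = (α u.2.1, sq u.2.1, 0))
    (BG : (K × V × K) → (K × V × K) → K)
    (hBG : ∀ u v, BG u v = B u.2.1 v.2.1 + u.1 * v.2.2 + u.2.2 * v.1)
    (G0 G1 : Set (K × V × K))
    (hG0 : G0 = {u | u.2.1 ∈ g0})
    (hG1 : G1 = {u | u.1 = 0 ∧ u.2.1 ∈ g1 ∧ u.2.2 = 0}) :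
    -- `g` is a Lie superalgebra
    (∀ u, brG u u = 0) ∧
    (∀ u v w, brG u (brG v w) + brG v (brG w u) + brG w (brG u v) = 0) ∧
    (∀ u ∈ G1, sG u ∈ G0) ∧
    (∀ (c : K), ∀ u ∈ G1, sG (c • u) = (c * c) • sG u) ∧
    (∀ u ∈ G1, ∀ v ∈ G1, sG (u + v) + sG u + sG v = brG u v) ∧
    (∀ u ∈ G1, ∀ v, brG (sG u) v = brG u (brG u v)) ∧
    -- `B_g` is a NIS: non-degenerate, invariant, even, 0̄-antisymmetric
    (∀ u, (∀ v, BG u v = 0) → u = 0) ∧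
    (∀ u v w, BG (brG u v) w = BG u (brG v w)) ∧
    (∀ u v, BG u v = BG v u) ∧
    (∀ u ∈ G1, BG u u = 0) ∧
    (∀ u ∈ G0, ∀ v ∈ G1, BG u v = 0) :=
  stmt15_general g0 g1 hcompl br sq halt hjac hsqmem hsqsmul hsqpol hsqjac B hBnd hBinv hBsym hBalt
    hBeven D hD0 hD1 hDbr hDsq hDskew hDalt α hαsmul hαpol brG hbrG sG hsG BG hBG G0 G1 hG0 hG1
end

section
/- Let (a, B_a) be a Lie superalgebra over a field of characteristic 2 with an even NIS, D an odd derivation with B_a(D(a),b) = B_a(a,D(b)) for all a,b, and a₀ ∈ a₀ with D² = ad_{a₀} and D(a₀) = 0. Then g := Kx ⊕ a ⊕ Kx* (x odd) with bracket [x, g] = 0, [a,b]_g := [a,b]_a + B_a(D(a),b)x, [x*, a]_g := D(a), and squaring s_g(rx + a + tx*) := s_a(a) + t²a₀ + tD(a), is a Lie superalgebra, and the form B_g extending B_a with B_g(x,x*) = 1 and B_g(x,x) = B_g(x*,x*) = 0, a ⊥ x, a ⊥ x*, is a NIS on g. -/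
/-!
All axioms are verified componentwise on `K × V × K`. The only genuinely new identity is the
`x`-component of the Jacobi identity, `B(D a, [b, c]) = B(D b, [c, a]) + B(D c, [a, b])`, which
holds because `D` is a `B`-symmetric derivation. Every other discrepancy is either a pair of
equal terms, which cancel in characteristic 2, or is absorbed by `D² = ad_{a₀}` and `D a₀ = 0`.
Evenness of `B` and oddness of `D` give `B(D v, v) = 0`, which is what makes `[u, u] = 0`.
-/

namespace OddDoubleExtension

variable {K V : Type*} [Field K] [AddCommGroup V] [Module K V]

def bracket (B : V →ₗ[K] V →ₗ[K] K) (br : V →ₗ[K] V →ₗ[K] V) (D : V →ₗ[K] V)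
    (u v : K × V × K) : K × V × K :=
  (B (D u.2.1) v.2.1, br u.2.1 v.2.1 + u.2.2 • D v.2.1 + v.2.2 • D u.2.1, 0)

def square (sq : V → V) (D : V →ₗ[K] V) (a₀ : V) (u : K × V × K) : K × V × K :=
  (0, sq u.2.1 + (u.2.2 * u.2.2) • a₀ + u.2.2 • D u.2.1, 0)

def form (B : V →ₗ[K] V →ₗ[K] K) (u v : K × V × K) : K :=
  B u.2.1 v.2.1 + u.1 * v.2.2 + u.2.2 * v.1

variable {g0 g1 : Submodule K V} {br : V →ₗ[K] V →ₗ[K] V} {B : V →ₗ[K] V →ₗ[K] K}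
  {D : V →ₗ[K] V} {sq : V → V} {a₀ : V}

theorem isAlt_comm_of_charTwo [CharP K 2] {N : Type*} [AddCommGroup N] [Module K N]
    {f : V →ₗ[K] V →ₗ[K] N} (hf : f.IsAlt) (x y : V) : f x y = f y x := by
  rw [← hf.neg, neg_eq_iff_add_eq_zero, ← two_smul K, CharTwo.two_eq_zero, zero_smul]

theorem form_deriv_self [CharP K 2] (hcompl : IsCompl g0 g1) (hBsym : ∀ x y, B x y = B y x)
    (hBeven : ∀ x ∈ g0, ∀ y ∈ g1, B x y = 0)
    (hD0 : ∀ x ∈ g0, D x ∈ g1) (hD1 : ∀ x ∈ g1, D x ∈ g0)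
    (hDsym : ∀ x y, B (D x) y = B x (D y)) (v : V) : B (D v) v = 0 := by
  obtain ⟨p, q, hp, hq, rfl⟩ := Submodule.codisjoint_iff_exists_add_eq.mp hcompl.codisjoint v
  have hpp : B (D p) p = 0 := by rw [hBsym]; exact hBeven p hp (D p) (hD0 p hp)
  have hqq : B (D q) q = 0 := hBeven (D q) (hD1 q hq) q hq
  have hpq : B (D p) q = B (D q) p := by rw [hDsym, hBsym]
  simp only [map_add, LinearMap.add_apply, hpp, hqq, hpq, zero_add, add_zero]
  exact CharTwo.add_self_eq_zero _

theorem form_deriv_deriv_self (hBsym : ∀ x y, B x y = B y x)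
    (hBinv : ∀ x y z, B (br x y) z = B x (br y z)) (halt : br.IsAlt)
    (hDsym : ∀ x y, B (D x) y = B x (D y)) (hD2 : ∀ v, D (D v) = br a₀ v) (v : V) :
    B (D v) (D v) = 0 := by
  rw [hDsym, hD2, hBsym, hBinv, halt, map_zero]

theorem form_deriv_bracket (hBsym : ∀ x y, B x y = B y x)
    (hBinv : ∀ x y z, B (br x y) z = B x (br y z))
    (hDbr : ∀ x y, D (br x y) = br (D x) y + br x (D y))
    (hDsym : ∀ x y, B (D x) y = B x (D y)) (a b c : V) :
    B (D a) (br b c) = B (D b) (br c a) + B (D c) (br a b) := by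
  rw [hDsym, hDbr, map_add, hBsym a, ← hBinv a b (D c), hBsym (br a b), hBinv (D b) c a]

theorem bracket_self [CharP K 2] (halt : br.IsAlt) (hDself : ∀ v, B (D v) v = 0)
    (u : K × V × K) : bracket B br D u u = 0 := by
  simp only [bracket, hDself, halt u.2.1, zero_add, Prod.mk_eq_zero, true_and, and_true]
  match_scalars
  grind

theorem bracket_jacobi [CharP K 2] (halt : br.IsAlt)
    (hjac : ∀ u v w : V, br u (br v w) + br v (br w u) + br w (br u v) = 0)
    (hBsym : ∀ x y, B x y = B y x) (hBinv : ∀ x y z, B (br x y) z = B x (br y z))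
    (hDbr : ∀ x y, D (br x y) = br (D x) y + br x (D y))
    (hDsym : ∀ x y, B (D x) y = B x (D y)) (hD2 : ∀ v, D (D v) = br a₀ v)
    (u v w : K × V × K) :
    bracket B br D u (bracket B br D v w) + bracket B br D v (bracket B br D w u) +
      bracket B br D w (bracket B br D u v) = 0 := by
  obtain ⟨r, a, t⟩ := u
  obtain ⟨p, b, s⟩ := v
  obtain ⟨q, c, m⟩ := w
  have hcomm := isAlt_comm_of_charTwo halt
  simp only [bracket, map_add, map_smul, smul_eq_mul, Prod.mk_add_mk, Prod.mk_eq_zero, add_zero,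
    and_true]
  constructor
  · linear_combination (norm := grind) form_deriv_bracket hBsym hBinv hDbr hDsym a b c +
      s * hBsym (D a) (D c) + m * hBsym (D a) (D b) + t * hBsym (D b) (D c)
  · simp only [hDbr, hD2, smul_add]
    linear_combination (norm := skip) hjac a b c + s • hcomm a (D c) + m • hcomm b (D a) +
      t • hcomm (D b) c
    match_scalars <;> grind

theorem square_mem (hsqmem : ∀ x ∈ g1, sq x ∈ g0) (ha₀ : a₀ ∈ g0)
    (hD1 : ∀ x ∈ g1, D x ∈ g0) {u : K × V × K} (hu : u.2.1 ∈ g1) :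
    (square sq D a₀ u).1 = 0 ∧ (square sq D a₀ u).2.1 ∈ g0 ∧
      (square sq D a₀ u).2.2 = 0 :=
  ⟨rfl, g0.add_mem (g0.add_mem (hsqmem _ hu) (g0.smul_mem _ ha₀)) (g0.smul_mem _ (hD1 _ hu)),
    rfl⟩

theorem square_smul (hsqsmul : ∀ (c : K), ∀ x ∈ g1, sq (c • x) = (c * c) • sq x) (c : K)
    {u : K × V × K} (hu : u.2.1 ∈ g1) :
    square sq D a₀ (c • u) = (c * c) • square sq D a₀ u := by
  simp only [square, Prod.smul_fst, Prod.smul_snd, Prod.smul_mk, map_smul, hsqsmul c _ hu,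
    smul_eq_mul, mul_zero, Prod.mk.injEq, true_and, and_true]
  module

theorem square_add [CharP K 2]
    (hsqpol : ∀ x ∈ g1, ∀ y ∈ g1, sq (x + y) + sq x + sq y = br x y)
    (hBeven : ∀ x ∈ g0, ∀ y ∈ g1, B x y = 0) (hD1 : ∀ x ∈ g1, D x ∈ g0)
    {u v : K × V × K} (hu : u.2.1 ∈ g1) (hv : v.2.1 ∈ g1) :
    square sq D a₀ (u + v) + square sq D a₀ u + square sq D a₀ v = bracket B br D u v := by
  simp only [square, bracket, Prod.fst_add, Prod.snd_add, Prod.mk_add_mk, add_zero, map_add,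
    hBeven _ (hD1 _ hu) _ hv, Prod.mk.injEq, true_and, and_true]
  linear_combination (norm := skip) hsqpol _ hu _ hv
  match_scalars <;> grind

theorem bracket_square [CharP K 2] (halt : br.IsAlt)
    (hsqjac : ∀ x ∈ g1, ∀ y : V, br (sq x) y = br x (br x y))
    (hBinv : ∀ x y z, B (br x y) z = B x (br y z))
    (hDbr : ∀ x y, D (br x y) = br (D x) y + br x (D y))
    (hDsq : ∀ x ∈ g1, D (sq x) = br (D x) x) (hDsym : ∀ x y, B (D x) y = B x (D y))
    (hD2 : ∀ v, D (D v) = br a₀ v) (hDa₀ : D a₀ = 0) (hDD : ∀ v, B (D v) (D v) = 0)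
    {u : K × V × K} (hu : u.2.1 ∈ g1) (v : K × V × K) :
    bracket B br D (square sq D a₀ u) v =
      bracket B br D u (bracket B br D u v) := by
  obtain ⟨r, a, t⟩ := u
  obtain ⟨p, b, s⟩ := v
  have hcomm := isAlt_comm_of_charTwo halt
  simp only [square, bracket, map_add, map_smul, LinearMap.add_apply, LinearMap.smul_apply,
    smul_eq_mul, hDsq a hu, hDa₀, hD2, hDbr, hDD, smul_zero, add_zero, zero_smul,
    Prod.mk.injEq, and_true]
  constructor
  · rw [hBinv, hcomm a₀, hBinv, ← hD2, ← hDsym]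
    ring
  · linear_combination (norm := skip) hsqjac a hu b + s • hcomm (D a) a
    match_scalars <;> grind

theorem form_nondegenerate (hBnd : ∀ x, (∀ y, B x y = 0) → x = 0) {u : K × V × K}
    (hu : ∀ v, form B u v = 0) : u = 0 := by
  obtain ⟨r, a, t⟩ := u
  have hr : r = 0 := by simpa [form] using hu (0, 0, 1)
  have ht : t = 0 := by simpa [form] using hu (1, 0, 0)
  have ha : a = 0 := hBnd a fun y => by simpa [form] using hu (0, y, 0)
  simp [hr, ha, ht]

theorem form_bracket (hBinv : ∀ x y z, B (br x y) z = B x (br y z))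
    (hDsym : ∀ x y, B (D x) y = B x (D y)) (u v w : K × V × K) :
    form B (bracket B br D u v) w = form B u (bracket B br D v w) := by
  simp only [form, bracket, map_add, map_smul, LinearMap.add_apply, LinearMap.smul_apply,
    smul_eq_mul]
  linear_combination hBinv u.2.1 v.2.1 w.2.1 + v.2.2 * hDsym u.2.1 w.2.1 +
    w.2.2 * hDsym u.2.1 v.2.1

theorem form_comm (hBsym : ∀ x y, B x y = B y x) (u v : K × V × K) :
    form B u v = form B v u := by
  simp only [form, hBsym u.2.1]
  ring

theorem form_self_of_odd [CharP K 2] (hBalt : ∀ x ∈ g1, B x x = 0) {u : K × V × K}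
    (hu : u.2.1 ∈ g1) : form B u u = 0 := by
  simp only [form, hBalt _ hu]
  grind

theorem form_even_odd (hBeven : ∀ x ∈ g0, ∀ y ∈ g1, B x y = 0) {u v : K × V × K}
    (hu : u.1 = 0 ∧ u.2.1 ∈ g0 ∧ u.2.2 = 0) (hv : v.2.1 ∈ g1) : form B u v = 0 := by
  simp only [form, hu.1, hu.2.2, hBeven _ hu.2.1 _ hv]
  ring

end OddDoubleExtension

open OddDoubleExtension

theorem stmt16_general {K V : Type*} [Field K] [CharP K 2]
    [AddCommGroup V] [Module K V]
    (g0 g1 : Submodule K V) (hcompl : IsCompl g0 g1)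
    (br : V →ₗ[K] V →ₗ[K] V) (sq : V → V)
    -- Lie superalgebra axioms on `a`
    (halt : ∀ u : V, br u u = 0)
    (hjac : ∀ u v w : V, br u (br v w) + br v (br w u) + br w (br u v) = 0)
    (hsqmem : ∀ x ∈ g1, sq x ∈ g0)
    (hsqsmul : ∀ (c : K), ∀ x ∈ g1, sq (c • x) = (c * c) • sq x)
    (hsqpol : ∀ x ∈ g1, ∀ y ∈ g1, sq (x + y) + sq x + sq y = br x y)
    (hsqjac : ∀ x ∈ g1, ∀ y : V, br (sq x) y = br x (br x y))
    -- even NIS on `a`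
    (B : V →ₗ[K] V →ₗ[K] K)
    (hBnd : ∀ x, (∀ y, B x y = 0) → x = 0)
    (hBinv : ∀ x y z, B (br x y) z = B x (br y z))
    (hBsym : ∀ x y, B x y = B y x)
    (hBalt : ∀ x ∈ g1, B x x = 0)
    (hBeven : ∀ x ∈ g0, ∀ y ∈ g1, B x y = 0)
    -- the odd derivation `D` and `a₀`
    (D : V →ₗ[K] V) (a₀ : V) (ha₀ : a₀ ∈ g0)
    (hD0 : ∀ x ∈ g0, D x ∈ g1) (hD1 : ∀ x ∈ g1, D x ∈ g0)
    (hDbr : ∀ x y, D (br x y) = br (D x) y + br x (D y))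
    (hDsq : ∀ x ∈ g1, D (sq x) = br (D x) x)
    (hDsym : ∀ x y, B (D x) y = B x (D y))
    (hD2 : ∀ v, D (D v) = br a₀ v)
    (hDa₀ : D a₀ = 0)
    -- the double extension data on `K × V × K` (`x = (1,0,0)`, `x* = (0,0,1)`, both odd)
    (brG : (K × V × K) → (K × V × K) → (K × V × K))
    (hbrG : ∀ u v, brG u v =
      (B (D u.2.1) v.2.1, br u.2.1 v.2.1 + u.2.2 • D v.2.1 + v.2.2 • D u.2.1, 0))
    (sG : (K × V × K) → (K × V × K))
    (hsG : ∀ u, sG u = (0, sq u.2.1 + (u.2.2 * u.2.2) • a₀ + u.2.2 • D u.2.1, 0))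
    (BG : (K × V × K) → (K × V × K) → K)
    (hBG : ∀ u v, BG u v = B u.2.1 v.2.1 + u.1 * v.2.2 + u.2.2 * v.1)
    (G0 G1 : Set (K × V × K))
    (hG0 : G0 = {u | u.1 = 0 ∧ u.2.1 ∈ g0 ∧ u.2.2 = 0})
    (hG1 : G1 = {u | u.2.1 ∈ g1}) :
    -- `g` is a Lie superalgebra
    (∀ u, brG u u = 0) ∧
    (∀ u v w, brG u (brG v w) + brG v (brG w u) + brG w (brG u v) = 0) ∧
    (∀ u ∈ G1, sG u ∈ G0) ∧
    (∀ (c : K), ∀ u ∈ G1, sG (c • u) = (c * c) • sG u) ∧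
    (∀ u ∈ G1, ∀ v ∈ G1, sG (u + v) + sG u + sG v = brG u v) ∧
    (∀ u ∈ G1, ∀ v, brG (sG u) v = brG u (brG u v)) ∧
    -- `B_g` is an even NIS: non-degenerate, invariant, even, 0̄-antisymmetric
    (∀ u, (∀ v, BG u v = 0) → u = 0) ∧
    (∀ u v w, BG (brG u v) w = BG u (brG v w)) ∧
    (∀ u v, BG u v = BG v u) ∧
    (∀ u ∈ G1, BG u u = 0) ∧
    (∀ u ∈ G0, ∀ v ∈ G1, BG u v = 0) := by
  obtain rfl : brG = bracket B br D := funext₂ hbrG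
  obtain rfl : sG = square sq D a₀ := funext hsG
  obtain rfl : BG = form B := funext₂ hBG
  subst hG0 hG1
  have hDself := form_deriv_self hcompl hBsym hBeven hD0 hD1 hDsym
  exact ⟨bracket_self halt hDself,
    bracket_jacobi halt hjac hBsym hBinv hDbr hDsym hD2,
    fun _ hu => square_mem hsqmem ha₀ hD1 hu,
    fun c _ hu => square_smul hsqsmul c hu,
    fun _ hu _ hv => square_add hsqpol hBeven hD1 hu hv,
    fun _ hu => bracket_square halt hsqjac hBinv hDbr hDsq hDsym hD2 hDa₀
      (form_deriv_deriv_self hBsym hBinv halt hDsym hD2) hu,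
    fun _ hu => form_nondegenerate hBnd hu,
    form_bracket hBinv hDsym,
    form_comm hBsym,
    fun _ hu => form_self_of_odd hBalt hu,
    fun _ hu _ hv => form_even_odd hBeven hu hv⟩

/-- the odd double extension (`D`-extension with `x` odd) of a NIS-Lie
superalgebra `(a, B_a)` in characteristic 2 (`B_a` even) by an odd derivation `D`
with `D² = ad_{a₀}`, `D(a₀) = 0`, is again a NIS-Lie superalgebra. The extended space
is `K x ⊕ a ⊕ K x*` with `x, x*` odd, modeled as `K × V × K`. -/
theorem stmt16 {K V : Type*} [Field K] [CharP K 2]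
    [AddCommGroup V] [Module K V]
    (g0 g1 : Submodule K V) (hcompl : IsCompl g0 g1)
    (br : V →ₗ[K] V →ₗ[K] V) (sq : V → V)
    -- Lie superalgebra axioms on `a`
    (halt : ∀ u : V, br u u = 0)
    (hjac : ∀ u v w : V, br u (br v w) + br v (br w u) + br w (br u v) = 0)
    (hbr00 : ∀ x ∈ g0, ∀ y ∈ g0, br x y ∈ g0)
    (hbr01 : ∀ x ∈ g0, ∀ y ∈ g1, br x y ∈ g1)
    (hbr11 : ∀ x ∈ g1, ∀ y ∈ g1, br x y ∈ g0)
    (hsqmem : ∀ x ∈ g1, sq x ∈ g0)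
    (hsqsmul : ∀ (c : K), ∀ x ∈ g1, sq (c • x) = (c * c) • sq x)
    (hsqpol : ∀ x ∈ g1, ∀ y ∈ g1, sq (x + y) + sq x + sq y = br x y)
    (hsqjac : ∀ x ∈ g1, ∀ y : V, br (sq x) y = br x (br x y))
    -- even NIS on `a`
    (B : V →ₗ[K] V →ₗ[K] K)
    (hBnd : ∀ x, (∀ y, B x y = 0) → x = 0)
    (hBinv : ∀ x y z, B (br x y) z = B x (br y z))
    (hBsym : ∀ x y, B x y = B y x)
    (hBalt : ∀ x ∈ g1, B x x = 0)
    (hBeven : ∀ x ∈ g0, ∀ y ∈ g1, B x y = 0)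
    -- the odd derivation `D` and `a₀`
    (D : V →ₗ[K] V) (a₀ : V) (ha₀ : a₀ ∈ g0)
    (hD0 : ∀ x ∈ g0, D x ∈ g1) (hD1 : ∀ x ∈ g1, D x ∈ g0)
    (hDbr : ∀ x y, D (br x y) = br (D x) y + br x (D y))
    (hDsq : ∀ x ∈ g1, D (sq x) = br (D x) x)
    (hDsym : ∀ x y, B (D x) y = B x (D y))
    (hD2 : ∀ v, D (D v) = br a₀ v)
    (hDa₀ : D a₀ = 0)
    -- the double extension data on `K × V × K` (`x = (1,0,0)`, `x* = (0,0,1)`, both odd)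
    (brG : (K × V × K) → (K × V × K) → (K × V × K))
    (hbrG : ∀ u v, brG u v =
      (B (D u.2.1) v.2.1, br u.2.1 v.2.1 + u.2.2 • D v.2.1 + v.2.2 • D u.2.1, 0))
    (sG : (K × V × K) → (K × V × K))
    (hsG : ∀ u, sG u = (0, sq u.2.1 + (u.2.2 * u.2.2) • a₀ + u.2.2 • D u.2.1, 0))
    (BG : (K × V × K) → (K × V × K) → K)
    (hBG : ∀ u v, BG u v = B u.2.1 v.2.1 + u.1 * v.2.2 + u.2.2 * v.1)
    (G0 G1 : Set (K × V × K))
    (hG0 : G0 = {u | u.1 = 0 ∧ u.2.1 ∈ g0 ∧ u.2.2 = 0})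
    (hG1 : G1 = {u | u.2.1 ∈ g1}) :
    -- `g` is a Lie superalgebra
    (∀ u, brG u u = 0) ∧
    (∀ u v w, brG u (brG v w) + brG v (brG w u) + brG w (brG u v) = 0) ∧
    (∀ u ∈ G1, sG u ∈ G0) ∧
    (∀ (c : K), ∀ u ∈ G1, sG (c • u) = (c * c) • sG u) ∧
    (∀ u ∈ G1, ∀ v ∈ G1, sG (u + v) + sG u + sG v = brG u v) ∧
    (∀ u ∈ G1, ∀ v, brG (sG u) v = brG u (brG u v)) ∧
    -- `B_g` is an even NIS: non-degenerate, invariant, even, 0̄-antisymmetric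
    (∀ u, (∀ v, BG u v = 0) → u = 0) ∧
    (∀ u v w, BG (brG u v) w = BG u (brG v w)) ∧
    (∀ u v, BG u v = BG v u) ∧
    (∀ u ∈ G1, BG u u = 0) ∧
    (∀ u ∈ G0, ∀ v ∈ G1, BG u v = 0) :=
  stmt16_general g0 g1 hcompl br sq halt hjac hsqmem hsqsmul hsqpol hsqjac B hBnd hBinv hBsym hBalt
    hBeven D a₀ ha₀ hD0 hD1 hDbr hDsq hDsym hD2 hDa₀ brG hbrG sG hsG BG hBG G0 G1 hG0 hG1
end
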